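/- The Hopf map p : S³ → S², p(z, w) = (2 z w̄, |z|² - |w|²) (identifying S³ ⊂ ℂ² and S² ⊂ ℂ × ℝ), is a smooth surjective map, and for each point q ∈ S², the fiber p⁻¹(q) is a circle (a smooth 1-submanifold of S³ diffeomorphic to S¹). -/

import Mathlib

/-- The Hopf map ℂ² → ℂ × ℝ, (z,w) ↦ (2 z w̄, |z|² - |w|²). -/
noncomputable def hopfMap (p : ℂ × ℂ) : ℂ × ℝ :=
  (2 * p.1 * (starRingEnd ℂ) p.2, ‖p.1‖ ^ 2 - ‖p.2‖ ^ 2)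

/-- The 3-sphere S³ = {(z,w) : |z|² + |w|² = 1} ⊆ ℂ². -/
def sphere3 : Set (ℂ × ℂ) := {p | ‖p.1‖ ^ 2 + ‖p.2‖ ^ 2 = 1}

/-- The 2-sphere S² = {(a,t) : |a|² + t² = 1} ⊆ ℂ × ℝ. -/
def sphere2 : Set (ℂ × ℝ) := {q | ‖q.1‖ ^ 2 + q.2 ^ 2 = 1}

lemma hopf_smooth : ContDiff ℝ (⊤ : ℕ∞) hopfMap := by
  apply ContDiff.prodMk
  · exact (contDiff_const.mul contDiff_fst).mul
      (Complex.conjCLE.contDiff.comp contDiff_snd)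
  · exact ((contDiff_fst.norm_sq ℝ)).sub ((contDiff_snd.norm_sq ℝ))

lemma hopf_mapsTo : Set.MapsTo hopfMap sphere3 sphere2 := by
  intro p hp
  have hp' : ‖p.1‖ ^ 2 + ‖p.2‖ ^ 2 = 1 := hp
  show ‖2 * p.1 * (starRingEnd ℂ) p.2‖ ^ 2 + (‖p.1‖ ^ 2 - ‖p.2‖ ^ 2) ^ 2 = 1
  rw [norm_mul, norm_mul, RCLike.norm_conj]
  simp only [Complex.norm_ofNat]
  nlinarith [norm_nonneg p.1, norm_nonneg p.2]

lemma hopf_surj : ∀ q ∈ sphere2, ∃ x ∈ sphere3, hopfMap x = q := by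
  rintro ⟨a, t⟩ hq
  have hq' : ‖a‖ ^ 2 + t ^ 2 = 1 := hq
  by_cases ht : t = -1
  · refine ⟨(0, 1), ?_, ?_⟩
    · show ‖(0:ℂ)‖ ^ 2 + ‖(1:ℂ)‖ ^ 2 = 1
      simp
    · have ha : a = 0 := by
        have : ‖a‖ ^ 2 = 0 := by rw [ht] at hq'; linarith
        simpa using this
      simp [hopfMap, ha, ht]
  · have ht1 : -1 < t := by
      rcases lt_or_eq_of_le (by nlinarith [sq_nonneg (t+1), norm_nonneg a] : (-1:ℝ) ≤ t) with h | h
      · exact h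
      · exact absurd h.symm ht
    have h1t : (1 + t) ≠ 0 := by linarith
    set r : ℝ := Real.sqrt ((1 + t) / 2) with hr
    have hrpos : 0 < r := Real.sqrt_pos.2 (by linarith)
    have hr2 : r ^ 2 = (1 + t) / 2 := Real.sq_sqrt (by linarith)
    have hA : ‖a‖ ^ 2 = (1 - t) * (1 + t) := by nlinarith
    refine ⟨((r : ℂ), (starRingEnd ℂ) a / (2 * r)), ?_, ?_⟩
    · show ‖(r:ℂ)‖ ^ 2 + ‖(starRingEnd ℂ) a / (2 * (r:ℂ))‖ ^ 2 = 1
      rw [norm_div, norm_mul, RCLike.norm_conj]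
      simp only [Complex.norm_ofNat, Complex.norm_real, Real.norm_eq_abs, abs_of_pos hrpos]
      rw [div_pow, mul_pow, hr2, hA]
      field_simp
      ring
    · have hrne : (r : ℂ) ≠ 0 := Complex.ofReal_ne_zero.2 (ne_of_gt hrpos)
      show (2 * (r:ℂ) * (starRingEnd ℂ) ((starRingEnd ℂ) a / (2 * (r:ℂ))),
        ‖(r:ℂ)‖ ^ 2 - ‖(starRingEnd ℂ) a / (2 * (r:ℂ))‖ ^ 2) = (a, t)
      simp only [Prod.mk.injEq]
      refine ⟨?_, ?_⟩
      · simp only [map_div₀, Complex.conj_conj, map_mul, Complex.conj_ofReal, map_ofNat]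
        field_simp
      · rw [norm_div, norm_mul, RCLike.norm_conj]
        simp only [Complex.norm_ofNat, Complex.norm_real, Real.norm_eq_abs, abs_of_pos hrpos]
        rw [div_pow, mul_pow, hr2, hA]
        field_simp
        ring

lemma norm_one_unit {l : ℂ} (hl : ‖l‖ = 1) : l * (starRingEnd ℂ) l = 1 := by
  rw [Complex.mul_conj]
  norm_cast
  rw [Complex.normSq_eq_norm_sq, hl]
  norm_num

lemma fiber_eq (x : ℂ × ℂ) (hx : x ∈ sphere3) :
    {y ∈ sphere3 | hopfMap y = hopfMap x} =
      (fun l : ℂ => (l * x.1, l * x.2)) '' Metric.sphere (0 : ℂ) 1 := by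
  have hx' : ‖x.1‖ ^ 2 + ‖x.2‖ ^ 2 = 1 := hx
  ext y
  simp only [Set.mem_setOf_eq, Set.mem_image, Metric.mem_sphere, dist_zero_right]
  constructor
  · rintro ⟨hy, heq⟩
    have hy' : ‖y.1‖ ^ 2 + ‖y.2‖ ^ 2 = 1 := hy
    have h1 : 2 * y.1 * (starRingEnd ℂ) y.2 = 2 * x.1 * (starRingEnd ℂ) x.2 :=
      congrArg Prod.fst heq
    have h2 : ‖y.1‖ ^ 2 - ‖y.2‖ ^ 2 = ‖x.1‖ ^ 2 - ‖x.2‖ ^ 2 := congrArg Prod.snd heq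
    have hn1 : ‖y.1‖ = ‖x.1‖ := by
      nlinarith [norm_nonneg y.1, norm_nonneg x.1]
    have hn2 : ‖y.2‖ = ‖x.2‖ := by
      nlinarith [norm_nonneg y.2, norm_nonneg x.2]
    by_cases hx2 : x.2 = 0
    · have hy2 : y.2 = 0 := by
        have : ‖y.2‖ = 0 := by rw [hn2, hx2, norm_zero]
        simpa using this
      have hx1 : x.1 ≠ 0 := by
        intro h
        rw [h, hx2] at hx'
        simp at hx'
      refine ⟨y.1 / x.1, ?_, ?_⟩
      · rw [norm_div, hn1, div_self (by simpa using hx1 : ‖x.1‖ ≠ 0)]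
      · rw [Prod.ext_iff]
        constructor
        · show y.1 / x.1 * x.1 = y.1
          field_simp
        · show y.1 / x.1 * x.2 = y.2
          rw [hx2, hy2, mul_zero]
    · have hx2' : (starRingEnd ℂ) x.2 ≠ 0 := by simpa using hx2
      have hy2n : y.2 ≠ 0 := by
        intro h
        rw [h, norm_zero] at hn2
        exact hx2 (by simpa using hn2.symm)
      refine ⟨y.2 / x.2, ?_, ?_⟩
      · rw [norm_div, hn2, div_self (by simpa using hx2 : ‖x.2‖ ≠ 0)]
      · have hl1 : (y.2 / x.2) * (starRingEnd ℂ) (y.2 / x.2) = 1 := by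
          apply norm_one_unit
          rw [norm_div, hn2, div_self (by simpa using hx2 : ‖x.2‖ ≠ 0)]
        rw [Prod.ext_iff]
        constructor
        · show y.2 / x.2 * x.1 = y.1
          have h1' : y.1 * (starRingEnd ℂ) y.2 = x.1 * (starRingEnd ℂ) x.2 := by
            have := h1
            ring_nf at this ⊢
            linear_combination this / 2
          have hcy : (starRingEnd ℂ) y.2 ≠ 0 := by simpa using hy2n
          have hnsq : (starRingEnd ℂ) y.2 * y.2 = (starRingEnd ℂ) x.2 * x.2 := by
            rw [Complex.conj_mul', Complex.conj_mul']
            norm_cast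
            rw [hn2]
          have key : y.2 * x.1 = y.1 * x.2 := by
            apply mul_right_cancel₀ hcy
            calc y.2 * x.1 * (starRingEnd ℂ) y.2
                = x.1 * ((starRingEnd ℂ) y.2 * y.2) := by ring
              _ = x.1 * ((starRingEnd ℂ) x.2 * x.2) := by rw [hnsq]
              _ = (x.1 * (starRingEnd ℂ) x.2) * x.2 := by ring
              _ = (y.1 * (starRingEnd ℂ) y.2) * x.2 := by rw [h1']
              _ = y.1 * x.2 * (starRingEnd ℂ) y.2 := by ring
          field_simp
          linear_combination key
        · show y.2 / x.2 * x.2 = y.2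
          field_simp
  · rintro ⟨l, hl, rfl⟩
    have hll : l * (starRingEnd ℂ) l = 1 := norm_one_unit hl
    refine ⟨?_, ?_⟩
    · show ‖l * x.1‖ ^ 2 + ‖l * x.2‖ ^ 2 = 1
      rw [norm_mul, norm_mul, hl]
      simpa using hx'
    · simp only [hopfMap, Prod.mk.injEq]
      constructor
      · rw [map_mul]
        calc 2 * (l * x.1) * ((starRingEnd ℂ) l * (starRingEnd ℂ) x.2)
            = (l * (starRingEnd ℂ) l) * (2 * x.1 * (starRingEnd ℂ) x.2) := by ring
          _ = 2 * x.1 * (starRingEnd ℂ) x.2 := by rw [hll, one_mul]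
      · rw [norm_mul, norm_mul, hl, one_mul, one_mul]

lemma orbit_smooth (x : ℂ × ℂ) : ContDiff ℝ (⊤ : ℕ∞) (fun l : ℂ => (l * x.1, l * x.2)) :=
  (contDiff_id.mul contDiff_const).prodMk (contDiff_id.mul contDiff_const)

lemma orbit_injOn (x : ℂ × ℂ) (hx : x ∈ sphere3) :
    Set.InjOn (fun l : ℂ => (l * x.1, l * x.2)) (Metric.sphere (0 : ℂ) 1) := by
  have hx' : ‖x.1‖ ^ 2 + ‖x.2‖ ^ 2 = 1 := hx
  intro l _ m _ h
  have h1 : l * x.1 = m * x.1 := congrArg Prod.fst h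
  have h2 : l * x.2 = m * x.2 := congrArg Prod.snd h
  by_cases hx1 : x.1 = 0
  · have hx2 : x.2 ≠ 0 := by
      intro h0
      rw [hx1, h0] at hx'
      simp at hx'
    exact mul_right_cancel₀ hx2 h2
  · exact mul_right_cancel₀ hx1 h1

/-- The Hopf map is a smooth map of S³ onto S², and each of its fibers is a
circle: the orbit of a point x under the U(1)-action λ • (z,w) = (λz, λw),
i.e. the image of the unit circle under the smooth injective parametrization
λ ↦ (λ z, λ w). -/
theorem stmt15 :
    ContDiff ℝ (⊤ : ℕ∞) hopfMap ∧
    Set.MapsTo hopfMap sphere3 sphere2 ∧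
    (∀ q ∈ sphere2, ∃ x ∈ sphere3, hopfMap x = q) ∧
    (∀ q ∈ sphere2, ∃ x ∈ sphere3, hopfMap x = q ∧
      {y ∈ sphere3 | hopfMap y = q} =
        (fun l : ℂ => (l * x.1, l * x.2)) '' Metric.sphere (0 : ℂ) 1 ∧
      ContDiff ℝ (⊤ : ℕ∞) (fun l : ℂ => (l * x.1, l * x.2)) ∧
      Set.InjOn (fun l : ℂ => (l * x.1, l * x.2)) (Metric.sphere (0 : ℂ) 1)) := by
  refine ⟨hopf_smooth, hopf_mapsTo, hopf_surj, ?_⟩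
  intro q hq
  obtain ⟨x, hx, hxq⟩ := hopf_surj q hq
  refine ⟨x, hx, hxq, ?_, orbit_smooth x, orbit_injOn x hx⟩
  rw [← hxq]
  exact fiber_eq x hx
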